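/- Under the same assumptions (A symmetric, A𝟏=0, Ax=e_R−e_L, Ā invertible), with A⁺ the pseudoinverse formula above, one has AA⁺ = I − 𝟏𝟏ᵀ/(n+1). -/

import Mathlib

open Matrix

noncomputable section

def onesVec (n : ℕ) : Fin (n+1) → ℝ := fun _ => 1

def gridVec (n : ℕ) : Fin (n+1) → ℝ := fun i => (i : ℝ) / n

def eL (n : ℕ) : Fin (n+1) → ℝ := fun i => if i.1 = 0 then 1 else 0

def eR (n : ℕ) : Fin (n+1) → ℝ := fun i => if i.1 = n then 1 else 0

def interiorEmb (n : ℕ) : Fin (n-1) → Fin (n+1) :=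
  fun i => ⟨i.1 + 1, by have := i.isLt; omega⟩

def centralBlock (n : ℕ) (A : Matrix (Fin (n+1)) (Fin (n+1)) ℝ) :
    Matrix (Fin (n-1)) (Fin (n-1)) ℝ :=
  A.submatrix (interiorEmb n) (interiorEmb n)

def pad (n : ℕ) (B : Matrix (Fin (n-1)) (Fin (n-1)) ℝ) :
    Matrix (Fin (n+1)) (Fin (n+1)) ℝ :=
  fun i j =>
    if hi : 0 < i.1 ∧ i.1 < n then
      if hj : 0 < j.1 ∧ j.1 < n then
        B ⟨i.1 - 1, by omega⟩ ⟨j.1 - 1, by omega⟩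
      else 0
    else 0

def G2 (n : ℕ) (A : Matrix (Fin (n+1)) (Fin (n+1)) ℝ) :
    Matrix (Fin (n+1)) (Fin (n+1)) ℝ :=
  pad n (centralBlock n A)⁻¹

def Aplus (n : ℕ) (A : Matrix (Fin (n+1)) (Fin (n+1)) ℝ) :
    Matrix (Fin (n+1)) (Fin (n+1)) ℝ :=
  (1 - ((n : ℝ) + 1)⁻¹ • vecMulVec (onesVec n) (onesVec n)) * G2 n A *
      (1 - ((n : ℝ) + 1)⁻¹ • vecMulVec (onesVec n) (onesVec n)) +
    vecMulVec (gridVec n - (1/2 : ℝ) • onesVec n)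
      (gridVec n - (1/2 : ℝ) • onesVec n)

/-! Let `E` be the inclusion of the interior coordinates, so that `G₂ = E (Eᵀ A E)⁻¹ Eᵀ`, and let
`Q = I - e_L (𝟏 - x)ᵀ - e_R xᵀ`. By symmetry `𝟏ᵀ A = 0` and `xᵀ A = (e_R - e_L)ᵀ`, which vanishes
on the interior, so `A E = Q A E`; and `Q e_L = Q e_R = 0`, so `Q E Eᵀ = Q`. Together these give
`A G₂ = Q`. With `P = I - 𝟏𝟏ᵀ/(n+1)` and `y = x - 𝟏/2` one has `A P = A`, `𝟏ᵀ P = 0`,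
`xᵀ P = y` and `A y = e_R - e_L`, so the rank-one terms of `Q P` cancel against `A y yᵀ`. -/

namespace Matrix

variable {m k R : Type*} [Fintype m] [Fintype k] [DecidableEq k] [CommRing R]

theorem mul_mul_inv_mul_transpose_eq {A Q : Matrix m m R} {E : Matrix m k R}
    (hQ : Q * E * Eᵀ = Q) (hAE : A * E = Q * A * E) (hinv : IsUnit (Eᵀ * A * E).det) :
    A * (E * (Eᵀ * A * E)⁻¹ * Eᵀ) = Q := by
  have hAE' : A * E = Q * E * (Eᵀ * A * E) := by
    rw [hAE]; conv_lhs => rw [← hQ]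
    simp only [Matrix.mul_assoc]
  calc A * (E * (Eᵀ * A * E)⁻¹ * Eᵀ) = A * E * (Eᵀ * A * E)⁻¹ * Eᵀ := by
        simp only [Matrix.mul_assoc]
    _ = Q * E * ((Eᵀ * A * E) * (Eᵀ * A * E)⁻¹) * Eᵀ := by
        rw [hAE']; simp only [Matrix.mul_assoc]
    _ = Q := by rw [mul_nonsing_inv _ hinv, Matrix.mul_one, hQ]

variable {ι : Type*} [Fintype ι]

theorem IsSymm.vecMul_eq_mulVec {A : Matrix ι ι R} (hA : A.IsSymm) (v : ι → R) :
    v ᵥ* A = A *ᵥ v := by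
  rw [← vecMul_transpose, hA.eq]

theorem vecMul_one_sub_smul_vecMulVec_one [DecidableEq ι] (c : R) (v : ι → R) :
    v ᵥ* (1 - c • vecMulVec 1 1) = v - (c * ∑ i, v i) • 1 := by
  rw [vecMul_sub, vecMul_one, vecMul_smul, vecMul_vecMulVec, dotProduct_one, smul_smul]

end Matrix

lemma onesVec_eq_one (n : ℕ) : onesVec n = 1 := rfl

lemma sum_gridVec {n : ℕ} (hn : n ≠ 0) : ∑ i, gridVec n i = ((n : ℝ) + 1) / 2 := by
  have hgauss : ((∑ i ∈ Finset.range (n + 1), i : ℕ) : ℝ) * 2 = (n + 1) * n := by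
    exact_mod_cast (Finset.sum_range_id_mul_two (n + 1)).trans (by simp [mul_comm])
  have hn' : (n : ℝ) ≠ 0 := Nat.cast_ne_zero.mpr hn
  simp only [gridVec, ← Finset.sum_div, Fin.sum_univ_eq_sum_range (fun i => (i : ℝ))]
  rw [div_eq_div_iff hn' two_ne_zero]
  push_cast at hgauss
  linarith

lemma gridVec_zero (n : ℕ) : gridVec n 0 = 0 := by
  simp [gridVec]

lemma gridVec_last {n : ℕ} (hn : n ≠ 0) : gridVec n (Fin.last n) = 1 := by
  simp [gridVec, hn]

lemma onesVec_vecMul_centering (n : ℕ) :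
    onesVec n ᵥ* (1 - ((n : ℝ) + 1)⁻¹ • vecMulVec (onesVec n) (onesVec n)) = 0 := by
  have hn1 : (n : ℝ) + 1 ≠ 0 := by positivity
  rw [onesVec_eq_one, vecMul_one_sub_smul_vecMulVec_one]
  simp [hn1]

lemma gridVec_vecMul_centering {n : ℕ} (hn : n ≠ 0) :
    gridVec n ᵥ* (1 - ((n : ℝ) + 1)⁻¹ • vecMulVec (onesVec n) (onesVec n)) =
      gridVec n - (1/2 : ℝ) • onesVec n := by
  rw [onesVec_eq_one, vecMul_one_sub_smul_vecMulVec_one, sum_gridVec hn]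
  field_simp

lemma eL_eq_single (n : ℕ) : eL n = Pi.single 0 1 := by
  funext i
  simp only [eL, Pi.single_apply, Fin.ext_iff, Fin.val_zero]

lemma eR_eq_single (n : ℕ) : eR n = Pi.single (Fin.last n) 1 := by
  funext i
  simp only [eR, Pi.single_apply, Fin.ext_iff, Fin.val_last]

lemma dotProduct_eL (n : ℕ) (v : Fin (n+1) → ℝ) : v ⬝ᵥ eL n = v 0 := by
  rw [eL_eq_single, dotProduct_single, mul_one]

lemma dotProduct_eR (n : ℕ) (v : Fin (n+1) → ℝ) : v ⬝ᵥ eR n = v (Fin.last n) := by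
  rw [eR_eq_single, dotProduct_single, mul_one]

def interiorIncl (n : ℕ) : Matrix (Fin (n+1)) (Fin (n-1)) ℝ :=
  (1 : Matrix (Fin (n+1)) (Fin (n+1)) ℝ).submatrix id (interiorEmb n)

lemma interiorEmb_injective (n : ℕ) : Function.Injective (interiorEmb n) := by
  intro a b h
  simpa [interiorEmb, Fin.ext_iff] using h

lemma interiorEmb_pred {n : ℕ} {i : Fin (n+1)} (hi : 0 < i.1 ∧ i.1 < n) :
    interiorEmb n ⟨i.1 - 1, by omega⟩ = i := by
  ext
  simp only [interiorEmb]
  omega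

lemma interiorIncl_apply_eq_zero {n : ℕ} {i : Fin (n+1)} (hi : ¬(0 < i.1 ∧ i.1 < n))
    (k : Fin (n-1)) : interiorIncl n i k = 0 := by
  refine one_apply_ne fun h => hi ?_
  have hik : i.1 = k.1 + 1 := congrArg Fin.val h
  have := k.isLt
  omega

lemma transpose_interiorIncl_mul_mul (n : ℕ) (M : Matrix (Fin (n+1)) (Fin (n+1)) ℝ) :
    (interiorIncl n)ᵀ * M * interiorIncl n = M.submatrix (interiorEmb n) (interiorEmb n) := by
  calc (interiorIncl n)ᵀ * M * interiorIncl n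
      = (1 : Matrix (Fin (n+1)) (Fin (n+1)) ℝ).submatrix (interiorEmb n) (Equiv.refl _) * M *
          (1 : Matrix (Fin (n+1)) (Fin (n+1)) ℝ).submatrix (Equiv.refl _) (interiorEmb n) := by
        rw [interiorIncl, transpose_submatrix, transpose_one]; rfl
    _ = M.submatrix (interiorEmb n) (interiorEmb n) := by
        rw [one_submatrix_mul, mul_submatrix_one]; rfl

lemma transpose_interiorIncl_mul_self (n : ℕ) : (interiorIncl n)ᵀ * interiorIncl n = 1 := by
  simpa using transpose_interiorIncl_mul_mul n 1 |>.trans (submatrix_one _ (interiorEmb_injective n))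

lemma vecMul_interiorIncl (n : ℕ) (v : Fin (n+1) → ℝ) :
    v ᵥ* interiorIncl n = v ∘ interiorEmb n := by
  simpa [interiorIncl] using submatrix_vecMul_equiv 1 v (Equiv.refl _) (interiorEmb n)

lemma eL_interiorEmb (n : ℕ) (a : Fin (n-1)) : eL n (interiorEmb n a) = 0 := by
  simp [eL, interiorEmb]

lemma eR_interiorEmb (n : ℕ) (a : Fin (n-1)) : eR n (interiorEmb n a) = 0 := by
  have := a.isLt
  exact if_neg (by simp only [interiorEmb]; omega)

lemma eq_zero_or_eq_last_of_not_interior {n : ℕ} {i : Fin (n+1)} (hi : ¬(0 < i.1 ∧ i.1 < n)) :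
    i = 0 ∨ i = Fin.last n := by
  have := i.isLt
  simp only [Fin.ext_iff, Fin.val_zero, Fin.val_last]
  omega

lemma interiorIncl_mul_mul_transpose_apply (n : ℕ) (B : Matrix (Fin (n-1)) (Fin (n-1)) ℝ)
    (a b : Fin (n-1)) :
    (interiorIncl n * B * (interiorIncl n)ᵀ) (interiorEmb n a) (interiorEmb n b) = B a b := by
  change ((interiorIncl n * B * (interiorIncl n)ᵀ).submatrix (interiorEmb n) (interiorEmb n)) a b = _
  rw [← transpose_interiorIncl_mul_mul]
  simp only [← Matrix.mul_assoc, transpose_interiorIncl_mul_self, Matrix.one_mul]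
  simp only [Matrix.mul_assoc, transpose_interiorIncl_mul_self, Matrix.mul_one]

lemma interiorIncl_mul_mul_transpose_apply_eq_zero {n : ℕ} (B : Matrix (Fin (n-1)) (Fin (n-1)) ℝ)
    {i j : Fin (n+1)} (h : ¬(0 < i.1 ∧ i.1 < n) ∨ ¬(0 < j.1 ∧ j.1 < n)) :
    (interiorIncl n * B * (interiorIncl n)ᵀ) i j = 0 := by
  rcases h with hi | hj
  · simp [mul_apply, interiorIncl_apply_eq_zero hi]
  · simp [mul_apply, interiorIncl_apply_eq_zero hj]

lemma pad_eq_interiorIncl_mul_mul_transpose (n : ℕ) (B : Matrix (Fin (n-1)) (Fin (n-1)) ℝ) :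
    pad n B = interiorIncl n * B * (interiorIncl n)ᵀ := by
  ext i j
  by_cases hi : 0 < i.1 ∧ i.1 < n
  · by_cases hj : 0 < j.1 ∧ j.1 < n
    · obtain ⟨a, rfl⟩ : ∃ a, interiorEmb n a = i := ⟨_, interiorEmb_pred hi⟩
      obtain ⟨b, rfl⟩ : ∃ b, interiorEmb n b = j := ⟨_, interiorEmb_pred hj⟩
      rw [interiorIncl_mul_mul_transpose_apply, pad, dif_pos hi, dif_pos hj]
      simp [interiorEmb]
    · rw [interiorIncl_mul_mul_transpose_apply_eq_zero B (.inr hj), pad, dif_pos hi, dif_neg hj]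
  · rw [interiorIncl_mul_mul_transpose_apply_eq_zero B (.inl hi), pad, dif_neg hi]

lemma interiorIncl_mul_transpose {n : ℕ} (hn : n ≠ 0) :
    interiorIncl n * (interiorIncl n)ᵀ = 1 - vecMulVec (eL n) (eL n) - vecMulVec (eR n) (eR n) := by
  have h0 : (0 : Fin (n+1)) ≠ Fin.last n := by simpa [Fin.ext_iff] using hn.symm
  have hE : interiorIncl n * (interiorIncl n)ᵀ =
      interiorIncl n * (1 : Matrix (Fin (n-1)) (Fin (n-1)) ℝ) * (interiorIncl n)ᵀ := by
    rw [Matrix.mul_one]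
  ext i j
  rw [hE]
  by_cases hi : 0 < i.1 ∧ i.1 < n
  · obtain ⟨a, rfl⟩ : ∃ a, interiorEmb n a = i := ⟨_, interiorEmb_pred hi⟩
    by_cases hj : 0 < j.1 ∧ j.1 < n
    · obtain ⟨b, rfl⟩ : ∃ b, interiorEmb n b = j := ⟨_, interiorEmb_pred hj⟩
      rw [interiorIncl_mul_mul_transpose_apply]
      simp [vecMulVec_apply, eL_interiorEmb, eR_interiorEmb, one_apply,
        (interiorEmb_injective n).eq_iff]
    · rw [interiorIncl_mul_mul_transpose_apply_eq_zero 1 (.inr hj)]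
      have ha : interiorEmb n a ≠ 0 ∧ interiorEmb n a ≠ Fin.last n := by
        simp only [ne_eq, Fin.ext_iff, Fin.val_zero, Fin.val_last]
        omega
      rcases eq_zero_or_eq_last_of_not_interior hj with rfl | rfl <;>
        simp [vecMulVec_apply, eL_interiorEmb, eR_interiorEmb, one_apply_ne, ha.1, ha.2]
  · rw [interiorIncl_mul_mul_transpose_apply_eq_zero 1 (.inl hi)]
    rcases eq_zero_or_eq_last_of_not_interior hi with rfl | rfl <;>
      simp [vecMulVec_apply, eL_eq_single, eR_eq_single, one_apply, Pi.single_apply, h0,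
        h0.symm, eq_comm]

lemma eL_vecMul_interiorIncl (n : ℕ) : eL n ᵥ* interiorIncl n = 0 := by
  rw [vecMul_interiorIncl]
  exact funext (eL_interiorEmb n)

lemma eR_vecMul_interiorIncl (n : ℕ) : eR n ᵥ* interiorIncl n = 0 := by
  rw [vecMul_interiorIncl]
  exact funext (eR_interiorEmb n)

lemma G2_eq_interiorIncl (n : ℕ) (A : Matrix (Fin (n+1)) (Fin (n+1)) ℝ) :
    G2 n A = interiorIncl n * ((interiorIncl n)ᵀ * A * interiorIncl n)⁻¹ * (interiorIncl n)ᵀ := by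
  rw [G2, pad_eq_interiorIncl_mul_mul_transpose, transpose_interiorIncl_mul_mul, centralBlock]

theorem mul_G2 {n : ℕ} (hn : n ≠ 0) {A : Matrix (Fin (n+1)) (Fin (n+1)) ℝ} (hsym : A.IsSymm)
    (h1 : A *ᵥ onesVec n = 0) (hx : A *ᵥ gridVec n = eR n - eL n)
    (hinv : IsUnit (centralBlock n A).det) :
    A * G2 n A = 1 - vecMulVec (eL n) (onesVec n - gridVec n) - vecMulVec (eR n) (gridVec n) := by
  set E := interiorIncl n
  set Q := 1 - vecMulVec (eL n) (onesVec n - gridVec n) - vecMulVec (eR n) (gridVec n)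
  have hQeL : Q *ᵥ eL n = 0 := by
    rw [sub_mulVec, sub_mulVec, one_mulVec, vecMulVec_mulVec, vecMulVec_mulVec]
    simp [dotProduct_eL, gridVec_zero, onesVec]
  have hQeR : Q *ᵥ eR n = 0 := by
    rw [sub_mulVec, sub_mulVec, one_mulVec, vecMulVec_mulVec, vecMulVec_mulVec]
    simp [dotProduct_eR, gridVec_last hn, onesVec]
  have hQ : Q * E * Eᵀ = Q := by
    rw [Matrix.mul_assoc, interiorIncl_mul_transpose hn]
    simp [Matrix.mul_sub, mul_vecMulVec, hQeL, hQeR]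
  have hAE : A * E = Q * A * E := by
    simp only [Q, E, Matrix.sub_mul, Matrix.one_mul, vecMulVec_mul, hsym.vecMul_eq_mulVec,
      mulVec_sub, h1, hx, zero_sub, neg_sub, sub_vecMul, eL_vecMul_interiorIncl,
      eR_vecMul_interiorIncl, sub_self]
    ext
    simp [vecMulVec_apply]
  rw [G2_eq_interiorIncl]
  exact mul_mul_inv_mul_transpose_eq hQ hAE (by rwa [transpose_interiorIncl_mul_mul])

theorem A_mul_Aplus_eq_proj
    (n : ℕ) (hn : 2 ≤ n) (A : Matrix (Fin (n+1)) (Fin (n+1)) ℝ)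
    (hsym : A.IsSymm)
    (h1 : A *ᵥ onesVec n = 0)
    (hx : A *ᵥ gridVec n = eR n - eL n)
    (hinv : IsUnit (centralBlock n A).det) :
    A * Aplus n A = 1 - ((n : ℝ) + 1)⁻¹ • vecMulVec (onesVec n) (onesVec n) := by
  have hn0 : n ≠ 0 := by omega
  set P := 1 - ((n : ℝ) + 1)⁻¹ • vecMulVec (onesVec n) (onesVec n) with hP
  set y := gridVec n - (1/2 : ℝ) • onesVec n with hy
  have hAP : A * P = A := by
    rw [hP, Matrix.mul_sub, Matrix.mul_one, Matrix.mul_smul, mul_vecMulVec, h1, zero_vecMulVec,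
      smul_zero, sub_zero]
  calc A * Aplus n A = A * G2 n A * P + vecMulVec (A *ᵥ y) y := by
        rw [Aplus, Matrix.mul_add, ← Matrix.mul_assoc, ← Matrix.mul_assoc, hAP, mul_vecMulVec]
    _ = P - vecMulVec (eL n) (-y) - vecMulVec (eR n) y + vecMulVec (eR n - eL n) y := by
        rw [mul_G2 hn0 hsym h1 hx hinv, Matrix.sub_mul, Matrix.sub_mul, Matrix.one_mul,
          vecMulVec_mul, vecMulVec_mul, sub_vecMul, onesVec_vecMul_centering,
          gridVec_vecMul_centering hn0, zero_sub, hy, mulVec_sub,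
          mulVec_smul, hx, h1, smul_zero, sub_zero]
    _ = P := by
        rw [sub_vecMulVec, vecMulVec_neg]
        abel
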